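/- arXiv:1306.2712 — 2 statements merged into one kernel-verified Lean document; each statement's English description precedes it below -/
import Mathlib

section
/- Let S = {(p_i, |Ψ_i⟩)} be an ensemble of maximally entangled states in ℂ^{d₁} ⊗ ℂ^{d₂} with d₁ ≤ d₂ (each having Schmidt rank d₁ with all Schmidt coefficients 1/√d₁). Then the separable fidelity satisfies F_S ≤ d₂ · ‖ρ‖_∞, where ρ = Σ_i p_i |Ψ_i⟩⟨Ψ_i|. -/
/-!
Write a state ψ of ℂ^{d₁} ⊗ ℂ^{d₂} as the d₁ × d₂ matrix M; maximal entanglement says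
M Mᴴ = I/d₁. Then ⟨ψ|a⊗b⟩ = (Mᴴa)·b, and Cauchy–Schwarz gives
|⟨ψ|a⊗b⟩|² ≤ ‖Mᴴa‖² ‖b‖² = ‖a⊗b‖²/d₁. Bounding the guessing term of each outcome by the
largest eigenvalue of ρ, the average fidelity is at most (‖ρ‖_∞/d₁) ∑ₐ mₐ ‖uₐ‖², and the
trace of the completeness relation ∑ₐ mₐ |uₐ⟩⟨uₐ| = I shows ∑ₐ mₐ ‖uₐ‖² = d₁ d₂.
-/

open Matrix
open scoped BigOperators ComplexOrder

noncomputable section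

/-- Product vector `|a⟩⊗|b⟩` in `ℂ^{d₁} ⊗ ℂ^{d₂}`. -/
def prodv {d₁ d₂ : ℕ} (a : Fin d₁ → ℂ) (b : Fin d₂ → ℂ) : Fin d₁ × Fin d₂ → ℂ :=
  fun y => a y.1 * b y.2

/-- Reduced density matrix of `|ψ⟩⟨ψ|` on the first factor. -/
def red₁ {d₁ d₂ : ℕ} (ψ : Fin d₁ × Fin d₂ → ℂ) : Matrix (Fin d₁) (Fin d₁) ℂ :=
  fun i i' => ∑ j, ψ (i, j) * star (ψ (i', j))

/-- The set of average fidelities achievable by (rank-one) separable measurements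
together with guessing strategies; its supremum is the separable fidelity `F_S`. -/
def sepFidSet {d₁ d₂ : ℕ} (N : ℕ) (p : Fin N → ℝ)
    (ψ : Fin N → (Fin d₁ × Fin d₂ → ℂ)) : Set ℝ :=
  {x : ℝ | ∃ (A : ℕ) (m : Fin A → ℝ) (χ₁ : Fin A → Fin d₁ → ℂ)
      (χ₂ : Fin A → Fin d₂ → ℂ) (φ : Fin A → (Fin d₁ × Fin d₂ → ℂ)),
    (∀ a, 0 < m a) ∧ (∀ a, star (φ a) ⬝ᵥ φ a = 1) ∧
    (∑ a, (m a : ℂ) • Matrix.vecMulVec (prodv (χ₁ a) (χ₂ a))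
        (star (prodv (χ₁ a) (χ₂ a))) = 1) ∧
    x = ∑ a, ∑ i, p i * m a *
          ‖star (ψ i) ⬝ᵥ prodv (χ₁ a) (χ₂ a)‖^2 *
          ‖star (ψ i) ⬝ᵥ φ a‖^2}

section

variable {ι α β : Type*} [Fintype ι] [Fintype α] [Fintype β]

lemma star_dotProduct_self_eq_sum_sq_norm (v : ι → ℂ) :
    star v ⬝ᵥ v = ((∑ y, ‖v y‖ ^ 2 : ℝ) : ℂ) := by
  push_cast
  simp [dotProduct, Complex.conj_mul']

lemma norm_dotProduct_sq_le (x y : ι → ℂ) :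
    ‖x ⬝ᵥ y‖ ^ 2 ≤ (∑ i, ‖x i‖ ^ 2) * ∑ i, ‖y i‖ ^ 2 := by
  calc ‖x ⬝ᵥ y‖ ^ 2 ≤ (∑ i, ‖x i‖ * ‖y i‖) ^ 2 := by
        gcongr
        simpa only [dotProduct, norm_mul] using norm_sum_le _ (fun i => x i * y i)
    _ ≤ _ := Finset.sum_mul_sq_le_sq_mul_sq _ _ _

lemma sum_mul_sum_sq_norm_eq_card [DecidableEq ι] (m : α → ℝ) (u : α → ι → ℂ)
    (h : ∑ a, (m a : ℂ) • vecMulVec (u a) (star (u a)) = 1) :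
    ∑ a, m a * ∑ y, ‖u a y‖ ^ 2 = Fintype.card ι := by
  have htr := congrArg trace h
  simp only [trace_sum, trace_smul, trace_vecMulVec, dotProduct_comm _ (star _),
    star_dotProduct_self_eq_sum_sq_norm, trace_one, smul_eq_mul] at htr
  exact_mod_cast htr

lemma re_star_dotProduct_sum_smul_vecMulVec_mulVec (p : β → ℝ) (ψ : β → ι → ℂ) (v : ι → ℂ) :
    (star v ⬝ᵥ (∑ i, (p i : ℂ) • vecMulVec (ψ i) (star (ψ i))) *ᵥ v).re
      = ∑ i, p i * ‖star (ψ i) ⬝ᵥ v‖ ^ 2 := by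
  simp only [sum_mulVec, dotProduct_sum, smul_mulVec, vecMulVec_mulVec, dotProduct_smul]
  simp only [star_dotProduct (v := v), op_smul_eq_mul, RCLike.star_def, Complex.conj_mul',
    smul_eq_mul]
  norm_cast

lemma sum_sq_norm_conjTranspose_mulVec {m n : Type*} [Fintype m] [Fintype n] [DecidableEq m]
    {M : Matrix m n ℂ} {c : ℝ} (hM : M * Mᴴ = (c : ℂ) • 1) (a : m → ℂ) :
    ∑ j, ‖(Mᴴ *ᵥ a) j‖ ^ 2 = c * ∑ i, ‖a i‖ ^ 2 := by
  have h : star (Mᴴ *ᵥ a) ⬝ᵥ (Mᴴ *ᵥ a) = c * (star a ⬝ᵥ a) := by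
    rw [star_mulVec, conjTranspose_conjTranspose, ← dotProduct_mulVec, mulVec_mulVec, hM,
      smul_mulVec, one_mulVec, dotProduct_smul, smul_eq_mul]
  rw [star_dotProduct_self_eq_sum_sq_norm, star_dotProduct_self_eq_sum_sq_norm] at h
  exact_mod_cast h

lemma sum_fidelity_le_of_overlap_le [DecidableEq ι] (p : β → ℝ) (hp : ∀ i, 0 ≤ p i)
    (ψ : β → ι → ℂ) (m : α → ℝ) (hm : ∀ a, 0 ≤ m a) (u φ : α → ι → ℂ)
    (hpovm : ∑ a, (m a : ℂ) • vecMulVec (u a) (star (u a)) = 1) {c ρ : ℝ} (hc : 0 ≤ c)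
    (hoverlap : ∀ i a, ‖star (ψ i) ⬝ᵥ u a‖ ^ 2 ≤ c * ∑ y, ‖u a y‖ ^ 2)
    (hρ : ∀ a, ∑ i, p i * ‖star (ψ i) ⬝ᵥ φ a‖ ^ 2 ≤ ρ) :
    ∑ a, ∑ i, p i * m a * ‖star (ψ i) ⬝ᵥ u a‖ ^ 2 * ‖star (ψ i) ⬝ᵥ φ a‖ ^ 2
      ≤ c * Fintype.card ι * ρ := by
  have hweight : ∀ a, 0 ≤ m a * (c * ∑ y, ‖u a y‖ ^ 2) := fun a =>
    mul_nonneg (hm a) (mul_nonneg hc (by positivity))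
  calc ∑ a, ∑ i, p i * m a * ‖star (ψ i) ⬝ᵥ u a‖ ^ 2 * ‖star (ψ i) ⬝ᵥ φ a‖ ^ 2
      ≤ ∑ a, m a * (c * ∑ y, ‖u a y‖ ^ 2) * ∑ i, p i * ‖star (ψ i) ⬝ᵥ φ a‖ ^ 2 := by
        refine Finset.sum_le_sum fun a _ => ?_
        rw [Finset.mul_sum]
        refine Finset.sum_le_sum fun i _ => ?_
        calc p i * m a * ‖star (ψ i) ⬝ᵥ u a‖ ^ 2 * ‖star (ψ i) ⬝ᵥ φ a‖ ^ 2
            = (p i * m a * ‖star (ψ i) ⬝ᵥ φ a‖ ^ 2) * ‖star (ψ i) ⬝ᵥ u a‖ ^ 2 := by ring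
          _ ≤ (p i * m a * ‖star (ψ i) ⬝ᵥ φ a‖ ^ 2) * (c * ∑ y, ‖u a y‖ ^ 2) :=
            mul_le_mul_of_nonneg_left (hoverlap i a)
              (mul_nonneg (mul_nonneg (hp i) (hm a)) (sq_nonneg _))
          _ = m a * (c * ∑ y, ‖u a y‖ ^ 2) * (p i * ‖star (ψ i) ⬝ᵥ φ a‖ ^ 2) := by ring
    _ ≤ ∑ a, m a * (c * ∑ y, ‖u a y‖ ^ 2) * ρ :=
        Finset.sum_le_sum fun a _ => mul_le_mul_of_nonneg_left (hρ a) (hweight a)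
    _ = c * ρ * ∑ a, m a * ∑ y, ‖u a y‖ ^ 2 := by
        rw [Finset.mul_sum]
        exact Finset.sum_congr rfl fun a _ => by ring
    _ = c * Fintype.card ι * ρ := by
        rw [sum_mul_sum_sq_norm_eq_card m u hpovm]
        ring

end

lemma red₁_eq_mul_conjTranspose {d₁ d₂ : ℕ} (ψ : Fin d₁ × Fin d₂ → ℂ) :
    red₁ ψ = of (Function.curry ψ) * (of (Function.curry ψ))ᴴ := by
  ext i i'
  simp [red₁, mul_apply]

lemma star_dotProduct_prodv {d₁ d₂ : ℕ} (ψ : Fin d₁ × Fin d₂ → ℂ) (a : Fin d₁ → ℂ)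
    (b : Fin d₂ → ℂ) :
    star ψ ⬝ᵥ prodv a b = ((of (Function.curry ψ))ᴴ *ᵥ a) ⬝ᵥ b := by
  simp only [dotProduct, Fintype.sum_prod_type, prodv, mulVec, Finset.sum_mul]
  rw [Finset.sum_comm]
  simp [mul_assoc]

lemma sum_sq_norm_prodv {d₁ d₂ : ℕ} (a : Fin d₁ → ℂ) (b : Fin d₂ → ℂ) :
    ∑ y, ‖prodv a b y‖ ^ 2 = (∑ i, ‖a i‖ ^ 2) * ∑ j, ‖b j‖ ^ 2 := by
  simp [prodv, Fintype.sum_prod_type, Finset.sum_mul_sum, mul_pow]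

lemma norm_sq_star_dotProduct_prodv_le {d₁ d₂ : ℕ} {ψ : Fin d₁ × Fin d₂ → ℂ}
    (hψ : red₁ ψ = ((d₁ : ℂ))⁻¹ • 1) (a : Fin d₁ → ℂ) (b : Fin d₂ → ℂ) :
    ‖star ψ ⬝ᵥ prodv a b‖ ^ 2 ≤ (d₁ : ℝ)⁻¹ * ∑ y, ‖prodv a b y‖ ^ 2 := by
  have hM : of (Function.curry ψ) * (of (Function.curry ψ))ᴴ = (((d₁ : ℝ)⁻¹ : ℝ) : ℂ) • 1 := by
    rw [← red₁_eq_mul_conjTranspose, hψ]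
    push_cast
    rfl
  calc ‖star ψ ⬝ᵥ prodv a b‖ ^ 2
      ≤ (∑ j, ‖((of (Function.curry ψ))ᴴ *ᵥ a) j‖ ^ 2) * ∑ j, ‖b j‖ ^ 2 := by
        rw [star_dotProduct_prodv]
        exact norm_dotProduct_sq_le _ _
    _ = (d₁ : ℝ)⁻¹ * ∑ y, ‖prodv a b y‖ ^ 2 := by
        rw [sum_sq_norm_conjTranspose_mulVec hM, sum_sq_norm_prodv, mul_assoc]

theorem stmt8_general (d₁ d₂ N : ℕ) (hd₁ : 0 < d₁)
    (ψ : Fin N → (Fin d₁ × Fin d₂ → ℂ))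
    (hmax : ∀ i, red₁ (ψ i) = ((d₁ : ℂ))⁻¹ • 1)
    (p : Fin N → ℝ) (hp : ∀ i, 0 ≤ p i)
    (ρnorm : ℝ)
    (hρ : IsGreatest {x : ℝ | ∃ v : Fin d₁ × Fin d₂ → ℂ, star v ⬝ᵥ v = 1 ∧
        x = (star v ⬝ᵥ ((∑ i, ((p i : ℝ) : ℂ) •
          Matrix.vecMulVec (ψ i) (star (ψ i))).mulVec v)).re} ρnorm) :
    sSup (sepFidSet N p ψ) ≤ (d₂ : ℝ) * ρnorm := by
  have hρ_nonneg : 0 ≤ ρnorm := by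
    obtain ⟨v, -, rfl⟩ := hρ.1
    rw [re_star_dotProduct_sum_smul_vecMulVec_mulVec]
    exact Finset.sum_nonneg fun i _ => mul_nonneg (hp i) (sq_nonneg _)
  refine Real.sSup_le ?_ (by positivity)
  rintro x ⟨A, m, χ₁, χ₂, φ, hm, hφ, hpovm, rfl⟩
  calc _ ≤ (d₁ : ℝ)⁻¹ * Fintype.card (Fin d₁ × Fin d₂) * ρnorm :=
        sum_fidelity_le_of_overlap_le p hp ψ m (fun a => (hm a).le) _ φ hpovm (by positivity)
          (fun i a => norm_sq_star_dotProduct_prodv_le (hmax i) _ _)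
          (fun a => hρ.2 ⟨φ a, hφ a, (re_star_dotProduct_sum_smul_vecMulVec_mulVec _ _ _).symm⟩)
    _ = d₂ * ρnorm := by
        have : (d₁ : ℝ) ≠ 0 := by positivity
        simp only [Fintype.card_prod, Fintype.card_fin, Nat.cast_mul]
        field_simp

/-- Corollary 3: for an ensemble of maximally entangled states in `ℂ^{d₁} ⊗ ℂ^{d₂}`
(`d₁ ≤ d₂`, each with reduced density matrix `I/d₁`), the separable fidelity satisfies
`F_S ≤ d₂ ‖ρ‖_∞`, where `ρ = ∑ᵢ pᵢ |Ψᵢ⟩⟨Ψᵢ|` and `‖ρ‖_∞` is its largest eigenvalue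
(maximal Rayleigh quotient). -/
theorem stmt8 (d₁ d₂ N : ℕ) (hd₁ : 0 < d₁) (hd : d₁ ≤ d₂)
    (ψ : Fin N → (Fin d₁ × Fin d₂ → ℂ)) (hψ : ∀ i, star (ψ i) ⬝ᵥ ψ i = 1)
    (hmax : ∀ i, red₁ (ψ i) = ((d₁ : ℂ))⁻¹ • 1)
    (p : Fin N → ℝ) (hp : ∀ i, 0 ≤ p i) (hpsum : ∑ i, p i = 1)
    (ρnorm : ℝ)
    (hρ : IsGreatest {x : ℝ | ∃ v : Fin d₁ × Fin d₂ → ℂ, star v ⬝ᵥ v = 1 ∧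
        x = (star v ⬝ᵥ ((∑ i, ((p i : ℝ) : ℂ) •
          Matrix.vecMulVec (ψ i) (star (ψ i))).mulVec v)).re} ρnorm) :
    sSup (sepFidSet N p ψ) ≤ (d₂ : ℝ) * ρnorm :=
  stmt8_general d₁ d₂ N hd₁ ψ hmax p hp ρnorm hρ
end
end

section
/- For the four Bell states in ℂ²⊗ℂ² with probabilities p₁ ≥ p₂ ≥ p₃ ≥ p₄, the separable fidelity (and separable success probability) equals p₁ + p₂. -/
/-!
Let `{m_a |u_a⟩⟨u_a|}` be a separable measurement, `u_a = χ₁ a ⊗ χ₂ a`, and write the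
fidelity as `∑ p_i q_i`. Since `∑_a m_a |⟨Φ_i|u_a⟩|² = ‖Φ_i‖² = 1`, each `q_i ≤ 1`. Every Bell
state has squared Schmidt coefficient `1/2`, so `|⟨Φ_i|u_a⟩|² ≤ ‖u_a‖² / 2`; Parseval in the
Bell basis and the trace of `∑_a m_a |u_a⟩⟨u_a| = 1` then give `∑_i q_i ≤ 4 / 2 = 2`, and for
decreasing `p` this forces `∑ p_i q_i ≤ p₁ + p₂`. Success probability is the fidelity with
`φ_a = Φ_{G a}`, and measuring both qubits in the `|±⟩` basis distinguishes `Φ₁` from `Φ₂`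
perfectly, so `p₁ + p₂` is attained in both sets.
-/

open Matrix
open scoped BigOperators ComplexOrder

noncomputable section

/-- Separable success-probability set; its supremum is `P_s(S)`. -/
def sepPsSet {d₁ d₂ : ℕ} (N : ℕ) (p : Fin N → ℝ)
    (ψ : Fin N → (Fin d₁ × Fin d₂ → ℂ)) : Set ℝ :=
  {x : ℝ | ∃ (A : ℕ) (m : Fin A → ℝ) (χ₁ : Fin A → Fin d₁ → ℂ)
      (χ₂ : Fin A → Fin d₂ → ℂ) (G : Fin A → Fin N),
    (∀ a, 0 < m a) ∧
    (∑ a, (m a : ℂ) • Matrix.vecMulVec (prodv (χ₁ a) (χ₂ a))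
        (star (prodv (χ₁ a) (χ₂ a))) = 1) ∧
    x = ∑ a, p (G a) * m a *
          ‖star (ψ (G a)) ⬝ᵥ prodv (χ₁ a) (χ₂ a)‖^2}

/-- The four Bell states in `ℂ² ⊗ ℂ²`. -/
def Bell : Fin 4 → (Fin 2 × Fin 2 → ℂ) :=
  ![fun y => if y.1 = y.2 then ((Real.sqrt 2)⁻¹ : ℂ) else 0,
    fun y => if y.1 = 0 ∧ y.2 = 0 then ((Real.sqrt 2)⁻¹ : ℂ)
             else if y.1 = 1 ∧ y.2 = 1 then -((Real.sqrt 2)⁻¹ : ℂ) else 0,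
    fun y => if y.1 ≠ y.2 then ((Real.sqrt 2)⁻¹ : ℂ) else 0,
    fun y => if y.1 = 0 ∧ y.2 = 1 then ((Real.sqrt 2)⁻¹ : ℂ)
             else if y.1 = 1 ∧ y.2 = 0 then -((Real.sqrt 2)⁻¹ : ℂ) else 0]

open scoped Kronecker

theorem sum_mul_le_sum_of_threshold {ι : Type*} [Fintype ι] [DecidableEq ι] (S : Finset ι)
    (p q : ι → ℝ) (t : ℝ) (ht : 0 ≤ t) (hS : ∀ i ∈ S, t ≤ p i) (hSc : ∀ i ∉ S, p i ≤ t)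
    (hq₀ : ∀ i, 0 ≤ q i) (hq₁ : ∀ i, q i ≤ 1) (hq : ∑ i, q i ≤ S.card) :
    ∑ i, p i * q i ≤ ∑ i ∈ S, p i := by
  have hpoint : ∀ i, p i * q i ≤ t * q i + if i ∈ S then p i - t else 0 := by
    intro i
    split_ifs with hi
    · nlinarith [hS i hi, hq₁ i]
    · nlinarith [hSc i hi, hq₀ i]
  calc ∑ i, p i * q i ≤ ∑ i, (t * q i + if i ∈ S then p i - t else 0) :=
        Finset.sum_le_sum fun i _ => hpoint i
    _ = t * (∑ i, q i - S.card) + ∑ i ∈ S, p i := by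
        rw [Finset.sum_add_distrib, ← Finset.mul_sum, Finset.sum_ite_mem, Finset.univ_inter,
          Finset.sum_sub_distrib]
        simp only [Finset.sum_const, nsmul_eq_mul]
        ring
    _ ≤ ∑ i ∈ S, p i := by nlinarith

section Vectors

variable {n : Type*} [Fintype n]

def normSq (v : n → ℂ) : ℝ := ∑ i, ‖v i‖ ^ 2

theorem star_dotProduct_self (v : n → ℂ) : star v ⬝ᵥ v = normSq v := by
  simp only [dotProduct, Pi.star_apply, Complex.star_def, normSq, Complex.ofReal_sum,
    Complex.ofReal_pow, Complex.conj_mul']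

theorem normSq_prodv {d₁ d₂ : ℕ} (a : Fin d₁ → ℂ) (b : Fin d₂ → ℂ) :
    normSq (prodv a b) = normSq a * normSq b := by
  simp only [normSq, prodv, Fintype.sum_prod_type, norm_mul, mul_pow, Finset.sum_mul_sum]

theorem star_prodv {d₁ d₂ : ℕ} (a : Fin d₁ → ℂ) (b : Fin d₂ → ℂ) :
    star (prodv a b) = prodv (star a) (star b) := by
  ext y
  simp [prodv]

theorem vecMulVec_prodv {d₁ d₂ : ℕ} (a c : Fin d₁ → ℂ) (b e : Fin d₂ → ℂ) :
    vecMulVec (prodv a b) (prodv c e) = vecMulVec a c ⊗ₖ vecMulVec b e := by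
  ext ⟨i, j⟩ ⟨k, l⟩
  simp only [prodv, vecMulVec_apply, kroneckerMap_apply]
  ring

variable [DecidableEq n] {A : Type*} [Fintype A] {m : A → ℝ} {u : A → n → ℂ}

theorem sum_mul_norm_star_dotProduct_sq
    (h : ∑ a, (m a : ℂ) • vecMulVec (u a) (star (u a)) = 1) (ψ : n → ℂ) :
    ∑ a, m a * ‖star ψ ⬝ᵥ u a‖ ^ 2 = normSq ψ := by
  have key := congrArg (fun M : Matrix n n ℂ => star ψ ⬝ᵥ (M *ᵥ ψ)) h
  simp only [one_mulVec, sum_mulVec, smul_mulVec, vecMulVec_mulVec, dotProduct_sum,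
    dotProduct_smul, star_dotProduct_self, op_smul_eq_smul, star_dotProduct (u _), smul_eq_mul,
    Complex.star_def, Complex.conj_mul'] at key
  exact_mod_cast key

theorem sum_mul_normSq_eq_card (h : ∑ a, (m a : ℂ) • vecMulVec (u a) (star (u a)) = 1) :
    ∑ a, m a * normSq (u a) = Fintype.card n := by
  have key := congrArg trace h
  simp only [trace_sum, trace_smul, trace_one, trace_vecMulVec, dotProduct_comm (u _),
    star_dotProduct_self, smul_eq_mul] at key
  exact_mod_cast key

end Vectors

section SeparableMeasurements

variable {d₁ d₂ N : ℕ} (ψ : Fin N → Fin d₁ × Fin d₂ → ℂ)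

theorem exists_weights_of_mem_sepFidSet (c : ℝ)
    (hparseval : ∀ φ, ∑ i, ‖star (ψ i) ⬝ᵥ φ‖ ^ 2 = normSq φ)
    (hunit : ∀ i, normSq (ψ i) = 1)
    (hschmidt : ∀ i a b, ‖star (ψ i) ⬝ᵥ prodv a b‖ ^ 2 ≤ c * (normSq a * normSq b))
    {p : Fin N → ℝ} {x : ℝ} (hx : x ∈ sepFidSet N p ψ) :
    ∃ q : Fin N → ℝ, (∀ i, 0 ≤ q i) ∧ (∀ i, q i ≤ 1) ∧ ∑ i, q i ≤ c * (d₁ * d₂) ∧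
      x = ∑ i, p i * q i := by
  obtain ⟨A, m, χ₁, χ₂, φ, hm, hφ, hpovm, rfl⟩ := hx
  set u : Fin A → Fin d₁ × Fin d₂ → ℂ := fun a => prodv (χ₁ a) (χ₂ a) with hu
  have hm₀ : ∀ a, 0 ≤ m a := fun a => (hm a).le
  have hφ₁ : ∀ a, normSq (φ a) = 1 := fun a => by
    exact_mod_cast (star_dotProduct_self (φ a)).symm.trans (hφ a)
  have hoverlap : ∀ i a, ‖star (ψ i) ⬝ᵥ φ a‖ ^ 2 ≤ 1 := fun i a => by
    rw [← hφ₁ a, ← hparseval]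
    exact Finset.single_le_sum (f := fun j => ‖star (ψ j) ⬝ᵥ φ a‖ ^ 2) (fun j _ => by positivity)
      (Finset.mem_univ i)
  refine ⟨fun i => ∑ a, m a * ‖star (ψ i) ⬝ᵥ u a‖ ^ 2 * ‖star (ψ i) ⬝ᵥ φ a‖ ^ 2,
    fun i => Finset.sum_nonneg fun a _ => by have := hm₀ a; positivity, fun i => ?_, ?_, ?_⟩
  · calc ∑ a, m a * ‖star (ψ i) ⬝ᵥ u a‖ ^ 2 * ‖star (ψ i) ⬝ᵥ φ a‖ ^ 2
        ≤ ∑ a, m a * ‖star (ψ i) ⬝ᵥ u a‖ ^ 2 := Finset.sum_le_sum fun a _ =>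
          mul_le_of_le_one_right (by have := hm₀ a; positivity) (hoverlap i a)
      _ = 1 := by rw [sum_mul_norm_star_dotProduct_sq hpovm, hunit]
  · calc ∑ i, ∑ a, m a * ‖star (ψ i) ⬝ᵥ u a‖ ^ 2 * ‖star (ψ i) ⬝ᵥ φ a‖ ^ 2
        = ∑ a, ∑ i, m a * ‖star (ψ i) ⬝ᵥ u a‖ ^ 2 * ‖star (ψ i) ⬝ᵥ φ a‖ ^ 2 := Finset.sum_comm
      _ ≤ ∑ a, ∑ i, m a * (c * normSq (u a)) * ‖star (ψ i) ⬝ᵥ φ a‖ ^ 2 := by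
          gcongr with a _ i _
          · exact hm₀ a
          · rw [hu, normSq_prodv]
            exact hschmidt i _ _
      _ = ∑ a, m a * (c * normSq (u a)) * ∑ i, ‖star (ψ i) ⬝ᵥ φ a‖ ^ 2 := by
          simp only [Finset.mul_sum]
      _ = c * ∑ a, m a * normSq (u a) := by
          simp only [hparseval, hφ₁, Finset.mul_sum]
          exact Finset.sum_congr rfl fun a _ => by ring
      _ = c * (d₁ * d₂) := by
          rw [sum_mul_normSq_eq_card hpovm]
          simp
  · rw [Finset.sum_comm]
    simp only [Finset.mul_sum, hu, mul_assoc]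

theorem sepPsSet_subset_sepFidSet (horth : ∀ i j, star (ψ i) ⬝ᵥ ψ j = if i = j then 1 else 0)
    (p : Fin N → ℝ) : sepPsSet N p ψ ⊆ sepFidSet N p ψ := by
  rintro x ⟨A, m, χ₁, χ₂, G, hm, hpovm, rfl⟩
  refine ⟨A, m, χ₁, χ₂, fun a => ψ (G a), hm, fun a => by simp [horth], hpovm, ?_⟩
  simp [horth, apply_ite]

end SeparableMeasurements

theorem norm_mul_add_mul_sq_le (x y z w : ℂ) :
    ‖x * z + y * w‖ ^ 2 ≤ (‖x‖ ^ 2 + ‖y‖ ^ 2) * (‖z‖ ^ 2 + ‖w‖ ^ 2) := by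
  have htri : ‖x * z + y * w‖ ≤ ‖x‖ * ‖z‖ + ‖y‖ * ‖w‖ :=
    (norm_add_le _ _).trans_eq (by rw [norm_mul, norm_mul])
  nlinarith [norm_nonneg (x * z + y * w), norm_nonneg x, norm_nonneg y, norm_nonneg z,
    norm_nonneg w, sq_nonneg (‖x‖ * ‖w‖ - ‖y‖ * ‖z‖)]

theorem normSq_fin_two (v : Fin 2 → ℂ) : normSq v = ‖v 0‖ ^ 2 + ‖v 1‖ ^ 2 :=
  Fin.sum_univ_two _

section Bell

theorem sqrt_two_inv_mul_self : (√2 : ℂ)⁻¹ * (√2 : ℂ)⁻¹ = 1 / 2 := by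
  rw [← mul_inv, ← Complex.ofReal_mul, Real.mul_self_sqrt zero_le_two]
  norm_num

theorem norm_sqrt_two_inv_sq : ‖(√2 : ℂ)⁻¹‖ ^ 2 = 1 / 2 := by
  rw [norm_inv, Complex.norm_real]
  simp

theorem star_Bell_dotProduct (φ : Fin 2 × Fin 2 → ℂ) :
    star (Bell 0) ⬝ᵥ φ = (√2 : ℂ)⁻¹ * (φ (0, 0) + φ (1, 1)) ∧
    star (Bell 1) ⬝ᵥ φ = (√2 : ℂ)⁻¹ * (φ (0, 0) - φ (1, 1)) ∧
    star (Bell 2) ⬝ᵥ φ = (√2 : ℂ)⁻¹ * (φ (0, 1) + φ (1, 0)) ∧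
    star (Bell 3) ⬝ᵥ φ = (√2 : ℂ)⁻¹ * (φ (0, 1) - φ (1, 0)) := by
  refine ⟨?_, ?_, ?_, ?_⟩ <;>
    simp [Bell, dotProduct, Fintype.sum_prod_type, Complex.conj_ofReal] <;> ring

theorem Bell_orthonormal (i j : Fin 4) :
    star (Bell i) ⬝ᵥ Bell j = if i = j then 1 else 0 := by
  fin_cases i <;> fin_cases j <;>
    simp [Bell, dotProduct, Fintype.sum_prod_type, Complex.conj_ofReal, sqrt_two_inv_mul_self] <;>
    norm_num

theorem normSq_Bell (i : Fin 4) : normSq (Bell i) = 1 := by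
  have h : (normSq (Bell i) : ℂ) = 1 := by
    rw [← star_dotProduct_self, Bell_orthonormal, if_pos rfl]
  exact_mod_cast h

theorem sum_norm_star_Bell_dotProduct_sq (φ : Fin 2 × Fin 2 → ℂ) :
    ∑ i, ‖star (Bell i) ⬝ᵥ φ‖ ^ 2 = normSq φ := by
  obtain ⟨h₀, h₁, h₂, h₃⟩ := star_Bell_dotProduct φ
  have hpar := fun x y : ℂ => parallelogram_law_with_norm ℂ x y
  simp only [Fin.sum_univ_four, h₀, h₁, h₂, h₃, norm_mul, mul_pow, norm_sqrt_two_inv_sq, normSq,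
    Fintype.sum_prod_type, Fin.sum_univ_two]
  nlinarith [hpar (φ (0, 0)) (φ (1, 1)), hpar (φ (0, 1)) (φ (1, 0))]

theorem norm_star_Bell_dotProduct_prodv_sq_le (i : Fin 4) (a b : Fin 2 → ℂ) :
    ‖star (Bell i) ⬝ᵥ prodv a b‖ ^ 2 ≤ 1 / 2 * (normSq a * normSq b) := by
  have key : ∀ z w : ℂ, ‖z‖ ^ 2 + ‖w‖ ^ 2 = normSq b →
      ‖(√2 : ℂ)⁻¹ * (a 0 * z + a 1 * w)‖ ^ 2 ≤ 1 / 2 * (normSq a * normSq b) := by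
    intro z w hb
    rw [norm_mul, mul_pow, norm_sqrt_two_inv_sq, ← hb, normSq_fin_two a]
    gcongr
    exact norm_mul_add_mul_sq_le _ _ _ _
  have hb := (normSq_fin_two b).symm
  obtain ⟨h₀, h₁, h₂, h₃⟩ := star_Bell_dotProduct (prodv a b)
  fin_cases i
  · simpa [h₀, prodv] using key (b 0) (b 1) hb
  · simpa [h₁, prodv, sub_eq_add_neg] using key (b 0) (-b 1) (by simpa using hb)
  · simpa [h₂, prodv] using key (b 1) (b 0) (by rw [add_comm, hb])
  · simpa [h₃, prodv, sub_eq_add_neg] using key (b 1) (-b 0) (by rw [norm_neg, add_comm, hb])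

end Bell

section HadamardMeasurement

def ketPlus : Fin 2 → ℂ := ![(√2 : ℂ)⁻¹, (√2 : ℂ)⁻¹]

def ketMinus : Fin 2 → ℂ := ![(√2 : ℂ)⁻¹, -(√2 : ℂ)⁻¹]

theorem vecMulVec_ketPlus_add_vecMulVec_ketMinus :
    vecMulVec ketPlus (star ketPlus) + vecMulVec ketMinus (star ketMinus) = 1 := by
  ext i j
  simp only [Matrix.add_apply, vecMulVec_apply]
  fin_cases i <;> fin_cases j <;>
    simp [ketPlus, ketMinus, Complex.conj_ofReal, sqrt_two_inv_mul_self] <;>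
    norm_num

def hadamardFirst : Fin 4 → Fin 2 → ℂ := ![ketPlus, ketPlus, ketMinus, ketMinus]

def hadamardSecond : Fin 4 → Fin 2 → ℂ := ![ketPlus, ketMinus, ketPlus, ketMinus]

def hadamardGuess : Fin 4 → Fin 4 := ![0, 1, 1, 0]

theorem sum_vecMulVec_hadamard :
    ∑ a : Fin 4, ((1 : ℝ) : ℂ) • vecMulVec (prodv (hadamardFirst a) (hadamardSecond a))
      (star (prodv (hadamardFirst a) (hadamardSecond a))) = 1 := by
  rw [← one_kronecker_one, ← vecMulVec_ketPlus_add_vecMulVec_ketMinus, add_kronecker,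
    kronecker_add, kronecker_add]
  simp [Fin.sum_univ_four, hadamardFirst, hadamardSecond, star_prodv, vecMulVec_prodv]
  abel

theorem star_Bell_hadamardGuess_dotProduct (a : Fin 4) :
    star (Bell (hadamardGuess a)) ⬝ᵥ prodv (hadamardFirst a) (hadamardSecond a) = (√2 : ℂ)⁻¹ := by
  fin_cases a <;>
    simp [hadamardGuess, hadamardFirst, hadamardSecond, ketPlus, ketMinus, prodv,
      (star_Bell_dotProduct _).1, (star_Bell_dotProduct _).2.1, sqrt_two_inv_mul_self] <;>
    norm_num

theorem add_mem_sepPsSet_Bell (p : Fin 4 → ℝ) : p 0 + p 1 ∈ sepPsSet 4 p Bell := by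
  refine ⟨4, fun _ => 1, hadamardFirst, hadamardSecond, hadamardGuess, fun _ => one_pos,
    sum_vecMulVec_hadamard, ?_⟩
  simp only [star_Bell_hadamardGuess_dotProduct, norm_sqrt_two_inv_sq, Fin.sum_univ_four]
  simp [hadamardGuess]
  ring

end HadamardMeasurement

theorem sepFidSet_Bell_le {p : Fin 4 → ℝ} (hp₁ : 0 ≤ p 1)
    (hord : ∀ i j : Fin 4, i ≤ j → p j ≤ p i) {x : ℝ} (hx : x ∈ sepFidSet 4 p Bell) :
    x ≤ p 0 + p 1 := by
  obtain ⟨q, hq₀, hq₁, hq, rfl⟩ := exists_weights_of_mem_sepFidSet Bell (1 / 2)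
    sum_norm_star_Bell_dotProduct_sq normSq_Bell norm_star_Bell_dotProduct_prodv_sq_le hx
  have hS : ∀ i ∈ ({0, 1} : Finset (Fin 4)), p 1 ≤ p i := by
    intro i hi
    fin_cases i <;> simp_all [hord 0 1 (by decide)]
  have hSc : ∀ i ∉ ({0, 1} : Finset (Fin 4)), p i ≤ p 1 := by
    intro i hi
    fin_cases i <;> simp_all [hord 1 2 (by decide), hord 1 3 (by decide)]
  simpa using sum_mul_le_sum_of_threshold {0, 1} p q (p 1) hp₁ hS hSc hq₀ hq₁
    (by norm_num at hq ⊢; linarith)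

theorem stmt12_general (p : Fin 4 → ℝ) (hp : ∀ i, 0 ≤ p i)
    (hord : ∀ i j : Fin 4, i ≤ j → p j ≤ p i) :
    sSup (sepFidSet 4 p Bell) = p 0 + p 1 ∧
    sSup (sepPsSet 4 p Bell) = p 0 + p 1 := by
  have hub : p 0 + p 1 ∈ upperBounds (sepFidSet 4 p Bell) :=
    fun _ hx => sepFidSet_Bell_le (hp 1) hord hx
  have hmem := add_mem_sepPsSet_Bell p
  have hsub := sepPsSet_subset_sepFidSet Bell Bell_orthonormal p
  exact ⟨IsGreatest.csSup_eq ⟨hsub hmem, hub⟩,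
    IsGreatest.csSup_eq ⟨hmem, fun _ hx => hub (hsub hx)⟩⟩

/-- Example 1: for the four Bell states with probabilities `p₁ ≥ p₂ ≥ p₃ ≥ p₄`, the
separable fidelity and the separable success probability both equal `p₁ + p₂`. -/
theorem stmt12 (p : Fin 4 → ℝ) (hp : ∀ i, 0 ≤ p i) (hpsum : ∑ i, p i = 1)
    (hord : ∀ i j : Fin 4, i ≤ j → p j ≤ p i) :
    sSup (sepFidSet 4 p Bell) = p 0 + p 1 ∧
    sSup (sepPsSet 4 p Bell) = p 0 + p 1 :=
  stmt12_general p hp hord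
end
end
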